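/- For every positive integer k and n ≥ 0: D_{2k+1,1-k}((2k+1)n) = (−1)^{kn}, D_{2k+1,1-k}((2k+1)n + k) = (−1)^{kn + binom(k,2)}, and D_{2k+1,1-k}((2k+1)n + j) = 0 for all other residues j modulo 2k+1. -/

import Mathlib

/-- The `k`-th convolution power of the Catalan numbers,
`C_{k,n} = (k/(2n+k)) * binom(2n+k, n)` for `n ≥ 0`, and `C_{k,n} = 0` for `n < 0`. -/
noncomputable def catalanConv (k : ℕ) (n : ℤ) : ℚ :=
  if 0 ≤ n then (k : ℚ) / (2 * (n : ℚ) + k) * ((2 * n.toNat + k).choose n.toNat) else 0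

/-- The Hankel determinant `D_{k,m}(N) = det (C_{k,i+j+m})_{i,j=0}^{N-1}`, `D_{k,m}(0) = 1`. -/
noncomputable def hankelDet (k : ℕ) (m : ℤ) (N : ℕ) : ℚ :=
  Matrix.det (Matrix.of fun i j : Fin N => catalanConv k ((i : ℤ) + (j : ℤ) + m))

/-!
Let `B` be the Catalan series, `B = 1 + X * B ^ 2`. Its powers have the coefficients
`[X ^ n] B ^ m = C_{m,n}`, so `D_{2k+1,1-k}(N)` is the `N × N` Hankel determinant of
`F = X ^ (k - 1) * B ^ (2k + 1)`. Put `c = 2k + 1`. The series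
`B ^ (-c i) * (1 + y + ⋯ + y ^ i)` with `y = (X * B ^ 2) ^ c` is a polynomial `Q i` with
`Q i (0) = 1` and `deg Q i ≤ d i := ⌊c i / 2⌋`, and
`Q (i + 1) * F = X ^ (k - 1) * Q i + X ^ (c (i + 1) + k - 1) * B ^ (c (i + 2))`.
So the coefficients of `Q i * F` vanish from `d i` up to `c i + k - 2`, and the next one is `1`.
Column operations with the coefficients of `Q i` make the Hankel matrix block triangular, with a
unit anti-triangular block of size `d (i + 1) - d i ∈ {k, k + 1}`; hence
`D(d (i + 1)) = ± D(d i)` and `D(N) = 0` for `d i < N < d (i + 1)`.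
The sizes `d i` are exactly the numbers `c n` and `c n + k`.
-/

open PowerSeries Finset
open scoped Polynomial

theorem odd_mul_succ_div_two (k i : ℕ) :
    (2 * k + 1) * (i + 1) / 2 = (2 * k + 1) * i - (2 * k + 1) * i / 2 + k := by
  rw [mul_add, mul_one]
  generalize (2 * k + 1) * i = a
  omega

theorem mul_two_mul_div_two (c n : ℕ) : c * (2 * n) / 2 = c * n := by
  rw [mul_left_comm]
  omega

theorem odd_mul_two_mul_add_one_div_two (k n : ℕ) :
    (2 * k + 1) * (2 * n + 1) / 2 = (2 * k + 1) * n + k := by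
  rw [odd_mul_succ_div_two, mul_two_mul_div_two, mul_left_comm]
  omega

theorem Matrix.det_of_antitriangular {R : Type*} [CommRing R] {n : ℕ}
    (M : Matrix (Fin n) (Fin n) R)
    (h0 : ∀ i j : Fin n, (i : ℕ) + j + 1 < n → M i j = 0)
    (h1 : ∀ i j : Fin n, (i : ℕ) + j + 1 = n → M i j = 1) :
    M.det = (-1) ^ n.choose 2 := by
  induction n with
  | zero => simp
  | succ n ih =>
    rw [det_succ_row_zero, sum_eq_single (Fin.last n)]
    · have hminor : (M.submatrix Fin.succ Fin.castSucc).det = (-1) ^ n.choose 2 :=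
        ih _ (fun i j h => h0 _ _ (by simp; omega)) (fun i j h => h1 _ _ (by simp; omega))
      rw [h1 0 _ (by simp), Fin.succAbove_last, hminor, Nat.choose_succ_succ',
        Nat.choose_one_right, pow_add, Fin.val_last, mul_one]
    · intro j _ hj
      rw [h0 0 j (by simpa using Fin.val_lt_last hj), mul_zero, zero_mul]
    · simp

namespace PowerSeries

variable {R : Type*} [CommRing R]

noncomputable def hankel (G : R⟦X⟧) (N : ℕ) : Matrix (Fin N) (Fin N) R :=
  Matrix.of fun i j => coeff ((i : ℕ) + j) G

theorem coeff_add_coe_mul (G : R⟦X⟧) {p : R[X]} {κ : ℕ} (hp : p.natDegree ≤ κ) (r : ℕ) :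
    coeff (r + κ) ((p : R⟦X⟧) * G) = ∑ t ∈ range (κ + 1), coeff (r + t) G * p.coeff (κ - t) := by
  rw [mul_comm, coeff_mul, Nat.sum_antidiagonal_eq_sum_range_succ_mk, Nat.succ_eq_add_one,
    add_assoc, sum_range_add, add_eq_right.mpr]
  · simp only [Polynomial.coeff_coe, Nat.add_sub_add_left]
  · refine sum_eq_zero fun a ha => ?_
    rw [Polynomial.coeff_coe, Polynomial.coeff_eq_zero_of_natDegree_lt (by simp at ha; omega),
      mul_zero]

theorem det_hankel_eq_det_coe_mul (G : R⟦X⟧) {p : R[X]} (hp0 : p.coeff 0 = 1) {d : ℕ}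
    (hp : p.natDegree ≤ d) (N : ℕ) :
    (hankel G N).det = (Matrix.of fun i j : Fin N =>
      if (j : ℕ) < d then coeff ((i : ℕ) + j) G else coeff ((i : ℕ) + j) ((p : R⟦X⟧) * G)).det := by
  -- `V` is unitriangular; it replaces column `j ≥ d` by `∑ t, p_{j-t} • (column t)`.
  let V : Matrix (Fin N) (Fin N) R := Matrix.of fun t j =>
    if (j : ℕ) < d then (if t = j then 1 else 0) else if (t : ℕ) ≤ j then p.coeff (j - t) else 0
  have hV : V.det = 1 := by
    rw [Matrix.det_of_isUpperTriangular]
    · exact prod_eq_one fun j _ => by simp [V, hp0]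
    · intro t j hjt
      have hjt : (j : ℕ) < t := hjt
      simp only [V, Matrix.of_apply, if_neg (Fin.ne_of_gt hjt), if_neg (not_le.mpr hjt), ite_self]
  rw [← mul_one (hankel G N).det, ← hV, ← Matrix.det_mul]
  congr 1
  ext i j
  simp only [Matrix.mul_apply, hankel, V, Matrix.of_apply]
  split_ifs with hj
  · simp
  · rw [coeff_add_coe_mul G (by omega)]
    rw [Fin.sum_univ_eq_sum_range (fun t => coeff (i + t) G * if t ≤ j then p.coeff (j - t) else 0),
      ← sum_subset (range_subset_range.mpr (by omega : (j : ℕ) + 1 ≤ N))]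
    · exact sum_congr rfl fun t ht => by rw [if_pos (by simpa [Nat.lt_succ_iff] using ht)]
    · intro t _ ht
      rw [if_neg (by simpa [Nat.lt_succ_iff] using ht), mul_zero]

theorem det_hankel_eq_zero_of_coe_mul (G : R⟦X⟧) {p : R[X]} (hp0 : p.coeff 0 = 1) {d N : ℕ}
    (hp : p.natDegree ≤ d) (hdN : d < N)
    (hzero : ∀ t, d ≤ t → t < d + N → coeff t ((p : R⟦X⟧) * G) = 0) :
    (hankel G N).det = 0 := by
  rw [det_hankel_eq_det_coe_mul G hp0 hp]
  refine Matrix.det_eq_zero_of_column_eq_zero ⟨d, hdN⟩ fun i => ?_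
  simp only [Matrix.of_apply, lt_irrefl, if_false]
  exact hzero _ (by omega) (by omega)

theorem det_hankel_add_of_coe_mul (G : R⟦X⟧) {p : R[X]} (hp0 : p.coeff 0 = 1) {d δ : ℕ}
    (hp : p.natDegree ≤ d)
    (hzero : ∀ t, d ≤ t → t + 1 < 2 * d + δ → coeff t ((p : R⟦X⟧) * G) = 0)
    (hone : ∀ t, t + 1 = 2 * d + δ → coeff t ((p : R⟦X⟧) * G) = 1) :
    (hankel G (d + δ)).det = (hankel G d).det * (-1) ^ δ.choose 2 := by
  rw [det_hankel_eq_det_coe_mul G hp0 hp, ← Matrix.det_submatrix_equiv_self finSumFinEquiv,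
    ← Matrix.fromBlocks_toBlocks (Matrix.submatrix _ _ _)]
  simp only [Matrix.toBlocks₁₁, Matrix.toBlocks₁₂, Matrix.toBlocks₂₁, Matrix.toBlocks₂₂,
    Matrix.submatrix_apply, Matrix.of_apply, finSumFinEquiv_apply_left,
    finSumFinEquiv_apply_right, Fin.val_castAdd, Fin.val_natAdd]
  have h12 : (Matrix.of fun (i : Fin d) (j : Fin δ) =>
      if d + (j : ℕ) < d then coeff ((i : ℕ) + (d + j)) G
      else coeff ((i : ℕ) + (d + j)) ((p : R⟦X⟧) * G)) = 0 := by
    ext i j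
    rw [Matrix.of_apply, if_neg (by omega)]
    exact hzero _ (by omega) (by omega)
  rw [h12, Matrix.det_fromBlocks_zero₁₂]
  congr 1
  · congr 1
    ext i j
    simp [hankel]
  · refine Matrix.det_of_antitriangular _ (fun i j h => ?_) (fun i j h => ?_) <;>
      simp only [Matrix.of_apply, if_neg (by omega : ¬ d + (j : ℕ) < d)]
    · exact hzero _ (by omega) (by omega)
    · exact hone _ (by omega)

variable (R) in
noncomputable def lucasPoly : ℕ → R[X]
  | 0 => 2
  | 1 => 1
  | a + 2 => lucasPoly (a + 1) - Polynomial.X * lucasPoly a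

variable (R) in
noncomputable def geomPoly (c : ℕ) : ℕ → R[X]
  | 0 => 1
  | 1 => lucasPoly R c
  | i + 2 => lucasPoly R (c * (i + 2)) + Polynomial.X ^ c * geomPoly c i

theorem natDegree_lucasPoly_le : ∀ a, (lucasPoly R a).natDegree ≤ a / 2
  | 0 => by simp [lucasPoly]
  | 1 => by simp [lucasPoly]
  | a + 2 => by
    have h0 := natDegree_lucasPoly_le a
    have h1 := natDegree_lucasPoly_le (a + 1)
    refine (Polynomial.natDegree_sub_le _ _).trans (max_le (by omega) ?_)
    exact Polynomial.natDegree_mul_le.trans (by grw [Polynomial.natDegree_X_le]; omega)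

theorem natDegree_geomPoly_le (c : ℕ) : ∀ i, (geomPoly R c i).natDegree ≤ c * i / 2
  | 0 => by simp [geomPoly]
  | 1 => by simpa [geomPoly] using natDegree_lucasPoly_le c
  | i + 2 => by
    have h := natDegree_geomPoly_le c i
    refine (Polynomial.natDegree_add_le _ _).trans (max_le (natDegree_lucasPoly_le _) ?_)
    refine Polynomial.natDegree_mul_le.trans ?_
    grw [Polynomial.natDegree_X_pow_le, h, mul_add]
    omega

section FunctionalEquation

variable {B : R⟦X⟧}

theorem constantCoeff_eq_one_of_eq (hB : B = 1 + X * B ^ 2) : constantCoeff B = 1 := by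
  rw [hB]; simp

/-- `lucasPoly a = α ^ a + β ^ a` for the roots `α = B⁻¹`, `β = X * B` of `T ^ 2 - T + X`. -/
theorem pow_mul_lucasPoly (hB : B = 1 + X * B ^ 2) :
    ∀ a, B ^ a * (lucasPoly R a : R⟦X⟧) = 1 + (X * B ^ 2) ^ a
  | 0 => by
    have h2 : ((2 : R[X]) : R⟦X⟧) = 2 := map_ofNat Polynomial.coeToPowerSeries.ringHom 2
    rw [lucasPoly, h2]
    ring
  | 1 => by simpa [lucasPoly] using hB
  | a + 2 => by
    have h0 := pow_mul_lucasPoly hB a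
    have h1 := pow_mul_lucasPoly hB (a + 1)
    simp only [lucasPoly, Polynomial.coe_sub, Polynomial.coe_mul, Polynomial.coe_X]
    linear_combination B * h1 - X * B ^ 2 * h0 + (1 + (X * B ^ 2) ^ (a + 1)) * hB

theorem pow_mul_geomPoly (hB : B = 1 + X * B ^ 2) (c : ℕ) :
    ∀ i, B ^ (c * i) * (geomPoly R c i : R⟦X⟧) = ∑ u ∈ range (i + 1), ((X * B ^ 2) ^ c) ^ u
  | 0 => by simp [geomPoly]
  | 1 => by simp [geomPoly, pow_mul_lucasPoly hB, sum_range_succ]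
  | i + 2 => by
    have h := pow_mul_geomPoly hB c i
    simp only [geomPoly, Polynomial.coe_add, Polynomial.coe_mul, Polynomial.coe_pow,
      Polynomial.coe_X]
    rw [geom_sum_succ, geom_sum_succ', ← h]
    linear_combination pow_mul_lucasPoly hB (c * (i + 2))

theorem geomPoly_coeff_zero (hB : B = 1 + X * B ^ 2) {c : ℕ} (hc : c ≠ 0) (i : ℕ) :
    (geomPoly R c i).coeff 0 = 1 := by
  simpa [constantCoeff_eq_one_of_eq hB, zero_pow hc, zero_geom_sum] using
    congrArg constantCoeff (pow_mul_geomPoly hB c i)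

theorem geomPoly_succ_mul (hB : B = 1 + X * B ^ 2) (c e i : ℕ) :
    (geomPoly R c (i + 1) : R⟦X⟧) * (X ^ e * B ^ c) =
      X ^ e * (geomPoly R c i : R⟦X⟧) + X ^ (c * (i + 1) + e) * B ^ (c * (i + 2)) := by
  have hunit : IsUnit (B ^ (c * (i + 1))) :=
    (isUnit_iff_constantCoeff.mpr (by simp [constantCoeff_eq_one_of_eq hB])).pow _
  refine hunit.mul_left_cancel ?_
  have h := pow_mul_geomPoly hB c i
  rw [← mul_assoc, pow_mul_geomPoly hB, sum_range_succ, ← h]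
  ring

end FunctionalEquation

section OddPower

variable {B : R⟦X⟧} {k : ℕ}

theorem exists_geomPoly_mul_eq (hB : B = 1 + X * B ^ 2) (hk : 1 ≤ k) (i : ℕ) :
    ∃ P : R[X], (∀ t, (2 * k + 1) * i / 2 ≤ t → P.coeff t = 0) ∧
      (geomPoly R (2 * k + 1) i : R⟦X⟧) * (X ^ (k - 1) * B ^ (2 * k + 1)) =
        (P : R⟦X⟧) + X ^ ((2 * k + 1) * i + (k - 1)) * B ^ ((2 * k + 1) * (i + 1)) := by
  cases i with
  | zero => exact ⟨0, by simp, by simp [geomPoly]⟩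
  | succ i =>
    refine ⟨Polynomial.X ^ (k - 1) * geomPoly R (2 * k + 1) i, fun t ht => ?_, ?_⟩
    · rw [Polynomial.coeff_X_pow_mul']
      split_ifs
      · refine Polynomial.coeff_eq_zero_of_natDegree_lt ((natDegree_geomPoly_le _ i).trans_lt ?_)
        rw [odd_mul_succ_div_two] at ht
        omega
      · rfl
    · rw [geomPoly_succ_mul hB]
      simp

theorem coeff_geomPoly_mul_eq_zero (hB : B = 1 + X * B ^ 2) (hk : 1 ≤ k) {i t : ℕ}
    (h₁ : (2 * k + 1) * i / 2 ≤ t) (h₂ : t < (2 * k + 1) * i + (k - 1)) :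
    coeff t ((geomPoly R (2 * k + 1) i : R⟦X⟧) * (X ^ (k - 1) * B ^ (2 * k + 1))) = 0 := by
  obtain ⟨P, hP, h⟩ := exists_geomPoly_mul_eq hB hk i
  rw [h, map_add, Polynomial.coeff_coe, hP t h₁, coeff_X_pow_mul', if_neg (by omega), add_zero]

theorem coeff_geomPoly_mul_eq_one (hB : B = 1 + X * B ^ 2) (hk : 1 ≤ k) (i : ℕ) :
    coeff ((2 * k + 1) * i + (k - 1))
      ((geomPoly R (2 * k + 1) i : R⟦X⟧) * (X ^ (k - 1) * B ^ (2 * k + 1))) = 1 := by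
  obtain ⟨P, hP, h⟩ := exists_geomPoly_mul_eq hB hk i
  rw [h, map_add, Polynomial.coeff_coe, hP _ (by omega), coeff_X_pow_mul', if_pos le_rfl,
    Nat.sub_self, coeff_zero_eq_constantCoeff_apply, map_pow, constantCoeff_eq_one_of_eq hB,
    one_pow, zero_add]

theorem det_hankel_succ_div_two (hB : B = 1 + X * B ^ 2) (hk : 1 ≤ k) (i : ℕ) :
    (hankel (X ^ (k - 1) * B ^ (2 * k + 1)) ((2 * k + 1) * (i + 1) / 2)).det =
      (hankel (X ^ (k - 1) * B ^ (2 * k + 1)) ((2 * k + 1) * i / 2)).det *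
        (-1) ^ ((2 * k + 1) * (i + 1) / 2 - (2 * k + 1) * i / 2).choose 2 := by
  rw [odd_mul_succ_div_two]
  obtain ⟨δ, hδ⟩ : ∃ δ, (2 * k + 1) * i - (2 * k + 1) * i / 2 + k = (2 * k + 1) * i / 2 + δ :=
    ⟨_, (Nat.add_sub_of_le (by omega)).symm⟩
  rw [hδ, Nat.add_sub_cancel_left]
  refine det_hankel_add_of_coe_mul _ (geomPoly_coeff_zero hB (by omega) i)
    (natDegree_geomPoly_le _ i) (fun t h₁ h₂ => coeff_geomPoly_mul_eq_zero hB hk h₁ (by omega))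
    (fun t ht => ?_)
  rw [show t = (2 * k + 1) * i + (k - 1) by omega]
  exact coeff_geomPoly_mul_eq_one hB hk i

theorem det_hankel_eq_zero_of_lt_of_lt (hB : B = 1 + X * B ^ 2) (hk : 1 ≤ k) {i N : ℕ}
    (h₁ : (2 * k + 1) * i / 2 < N) (h₂ : N < (2 * k + 1) * (i + 1) / 2) :
    (hankel (X ^ (k - 1) * B ^ (2 * k + 1)) N).det = 0 := by
  rw [odd_mul_succ_div_two] at h₂
  exact det_hankel_eq_zero_of_coe_mul _ (geomPoly_coeff_zero hB (by omega) i)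
    (natDegree_geomPoly_le _ i) h₁ fun t h₁ h₂ => coeff_geomPoly_mul_eq_zero hB hk h₁ (by omega)

theorem det_hankel_odd_mul_add (hB : B = 1 + X * B ^ 2) (hk : 1 ≤ k) (n : ℕ) :
    (hankel (X ^ (k - 1) * B ^ (2 * k + 1)) ((2 * k + 1) * n + k)).det =
      (hankel (X ^ (k - 1) * B ^ (2 * k + 1)) ((2 * k + 1) * n)).det * (-1) ^ k.choose 2 := by
  have h := det_hankel_succ_div_two hB hk (2 * n)
  rwa [odd_mul_two_mul_add_one_div_two, mul_two_mul_div_two, add_tsub_cancel_left] at h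

theorem det_hankel_odd_mul_succ (hB : B = 1 + X * B ^ 2) (hk : 1 ≤ k) (n : ℕ) :
    (hankel (X ^ (k - 1) * B ^ (2 * k + 1)) ((2 * k + 1) * (n + 1))).det =
      (hankel (X ^ (k - 1) * B ^ (2 * k + 1)) ((2 * k + 1) * n + k)).det *
        (-1) ^ (k + 1).choose 2 := by
  have h := det_hankel_succ_div_two hB hk (2 * n + 1)
  rwa [show 2 * n + 1 + 1 = 2 * (n + 1) by ring, mul_two_mul_div_two,
    odd_mul_two_mul_add_one_div_two, show (2 * k + 1) * (n + 1) - ((2 * k + 1) * n + k) = k + 1 by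
      rw [mul_add]; omega] at h

theorem det_hankel_odd_mul (hB : B = 1 + X * B ^ 2) (hk : 1 ≤ k) (n : ℕ) :
    (hankel (X ^ (k - 1) * B ^ (2 * k + 1)) ((2 * k + 1) * n)).det = (-1) ^ (k * n) := by
  induction n with
  | zero => simp [hankel]
  | succ n ih =>
    rw [det_hankel_odd_mul_succ hB hk, det_hankel_odd_mul_add hB hk, ih, Nat.choose_succ_succ',
      Nat.choose_one_right, ← pow_add, ← pow_add,
      show k * n + k.choose 2 + (k + k.choose 2) = k * (n + 1) + 2 * k.choose 2 by ring, pow_add,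
      pow_mul _ 2, neg_one_sq, one_pow, mul_one]

end OddPower

end PowerSeries

theorem catalanConv_natCast (m n : ℕ) :
    catalanConv m n = m / (2 * n + m) * (2 * n + m).choose n := by
  simp [catalanConv]

theorem catalanConv_add_one_natCast_add_one (m n : ℕ) :
    catalanConv (m + 1) ↑(n + 1) = catalanConv m ↑(n + 1) + catalanConv (m + 2) n := by
  have h₁ := Nat.add_one_mul_choose_eq (2 * n + m + 2) n
  have h₂ := Nat.choose_succ_right_eq (2 * n + m + 2) n
  rw [show 2 * n + m + 2 - n = n + m + 2 by omega] at h₂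
  simp only [catalanConv_natCast, show 2 * (n + 1) + (m + 1) = 2 * n + m + 2 + 1 by ring,
    show 2 * (n + 1) + m = 2 * n + m + 2 by ring, show 2 * n + (m + 2) = 2 * n + m + 2 by ring]
  have hn : (n + 1 : ℚ) ≠ 0 := by positivity
  have e₁ : ((2 * n + m + 2 + 1).choose (n + 1) : ℚ) =
      (2 * n + m + 3) * (2 * n + m + 2).choose n / (n + 1) := by
    rw [eq_div_iff hn]; exact_mod_cast h₁.symm
  have e₂ : ((2 * n + m + 2).choose (n + 1) : ℚ) =
      (2 * n + m + 2).choose n * (n + m + 2) / (n + 1) := by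
    rw [eq_div_iff hn]; exact_mod_cast h₂
  rw [e₁, e₂]
  push_cast
  field_simp
  ring

/-- The case `n = m = 0` is excluded since `catalanConv 0 0 = 0 / 0 = 0`. -/
theorem coeff_pow_eq_catalanConv {B : ℚ⟦X⟧} (hB : B = 1 + X * B ^ 2) (n m : ℕ)
    (hnm : n + m ≠ 0) : coeff n (B ^ m) = catalanConv m n := by
  induction n generalizing m with
  | zero =>
    have hm : (m : ℚ) ≠ 0 := by simpa using hnm
    simp [catalanConv, constantCoeff_eq_one_of_eq hB, hm]
  | succ n ih =>
    clear hnm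
    induction m with
    | zero => simp [catalanConv]
    | succ m ihm =>
      have hrec : B ^ (m + 1) = B ^ m + X * B ^ (m + 2) := by linear_combination B ^ m * hB
      rw [hrec, map_add, coeff_succ_X_mul, ihm, ih _ (by omega),
        catalanConv_add_one_natCast_add_one]

theorem hankelDet_neg_natCast_eq_det_hankel {B : ℚ⟦X⟧} (hB : B = 1 + X * B ^ 2) {m : ℕ} (hm : m ≠ 0)
    (e N : ℕ) : hankelDet m (-e) N = (hankel (X ^ e * B ^ m) N).det := by
  unfold hankelDet hankel
  congr 1
  ext i j
  rw [Matrix.of_apply, Matrix.of_apply, coeff_X_pow_mul']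
  split_ifs with h
  · rw [show (i : ℤ) + j + -e = ((i + j - e : ℕ) : ℤ) by omega,
      coeff_pow_eq_catalanConv hB _ _ (by omega)]
  · rw [catalanConv, if_neg (by omega)]

/-- STATEMENT 11: for every positive integer `k` and `n ≥ 0`:
`D_{2k+1,1-k}((2k+1)n) = (-1)^(kn)`,
`D_{2k+1,1-k}((2k+1)n + k) = (-1)^(kn + binom(k,2))`, and
`D_{2k+1,1-k}((2k+1)n + j) = 0` for all other residues `j` modulo `2k+1`. -/
theorem stmt11 (k : ℕ) (hk : 1 ≤ k) (n : ℕ) :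
    hankelDet (2 * k + 1) (1 - (k : ℤ)) ((2 * k + 1) * n) = (-1 : ℚ) ^ (k * n) ∧
    hankelDet (2 * k + 1) (1 - (k : ℤ)) ((2 * k + 1) * n + k) =
      (-1 : ℚ) ^ (k * n + k.choose 2) ∧
    (∀ j : ℕ, j < 2 * k + 1 → j ≠ 0 → j ≠ k →
      hankelDet (2 * k + 1) (1 - (k : ℤ)) ((2 * k + 1) * n + j) = 0) := by
  obtain ⟨B, hB⟩ : ∃ B : ℚ⟦X⟧, B = 1 + X * B ^ 2 :=
    ⟨map (Nat.castRingHom ℚ) catalanSeries, by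
      simpa [add_comm, mul_comm] using
        (congrArg (map (Nat.castRingHom ℚ)) catalanSeries_sq_mul_X_add_one).symm⟩
  have hD (N : ℕ) : hankelDet (2 * k + 1) (1 - k) N =
      (hankel (X ^ (k - 1) * B ^ (2 * k + 1)) N).det := by
    rw [show (1 : ℤ) - k = -((k - 1 : ℕ) : ℤ) by omega]
    exact hankelDet_neg_natCast_eq_det_hankel hB (by omega) _ _
  simp only [hD]
  refine ⟨det_hankel_odd_mul hB hk n, ?_, fun j hj hj0 hjk => ?_⟩
  · rw [det_hankel_odd_mul_add hB hk, det_hankel_odd_mul hB hk, pow_add]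
  rcases lt_or_gt_of_ne hjk with hjk | hjk
  · exact det_hankel_eq_zero_of_lt_of_lt hB hk (i := 2 * n) (by rw [mul_two_mul_div_two]; omega)
      (by rw [odd_mul_two_mul_add_one_div_two]; omega)
  · exact det_hankel_eq_zero_of_lt_of_lt hB hk (i := 2 * n + 1)
      (by rw [odd_mul_two_mul_add_one_div_two]; omega)
      (by rw [show 2 * n + 1 + 1 = 2 * (n + 1) by ring, mul_two_mul_div_two, mul_add]; omega)
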